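/- arXiv:2302.01256 — 3 statements merged into one kernel-verified Lean document; each statement's English description precedes it below -/
import Mathlib

section
/- Let E be a finite-dimensional real normed vector space, X1, X2, X0 : E → E C^∞ vector fields and c¹, c² : E → ℝ C^∞ functions such that [X2, X1] = c¹·X1 + c²·X2 + X0 pointwise. Let δ : E → ℝ be C^∞ with (X1δ)² + (X2δ)² = 1 everywhere. Set N = (X1δ)·X1 + (X2δ)·X2, JN = (X1δ)·X2 − (X2δ)·X1, and H = −X1(X1δ) − X2(X2δ) − c²·(X1δ) + c¹·(X2δ). Then, as an identity of vector fields on E, [JN, N] = −H·JN − (X0δ)·N + X0. -/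
/-!
Write `a = X1δ` and `b = X2δ`. Expanding `[a X2 - b X1, a X1 + b X2]` by bilinearity and the
Leibniz rule `[f X, g Y] = f g [X, Y] + f (X g) Y - g (Y f) X` leaves `(a² + b²) [X2, X1]` plus
terms of first order in `a` and `b`. These are eliminated with the derivatives
`a (X a) + b (X b) = 0` of the eikonal equation and with `X2 a - X1 b = [X2, X1] δ`, which holds
because the Hessian of `δ` is symmetric.
-/

/-- The Lie bracket of two vector fields on a normed vector space:
`[X, Y](p) = DY(p)(X(p)) − DX(p)(Y(p))`. -/
noncomputable def vlie {E : Type*} [NormedAddCommGroup E] [NormedSpace ℝ E]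
    (X Y : E → E) : E → E :=
  fun p => fderiv ℝ Y p (X p) - fderiv ℝ X p (Y p)

section VectorFields

variable {E : Type*} [NormedAddCommGroup E] [NormedSpace ℝ E]

lemma vlie_swap (X Y : E → E) (p : E) : vlie Y X p = -vlie X Y p :=
  (neg_sub _ _).symm

variable {X Y Z : E → E} {p : E}

lemma vlie_self : vlie X X p = 0 :=
  sub_self _

lemma vlie_sub_left (hX : DifferentiableAt ℝ X p) (hY : DifferentiableAt ℝ Y p) :
    vlie (fun q => X q - Y q) Z p = vlie X Z p - vlie Y Z p := by
  simp only [vlie, fderiv_fun_sub hX hY, sub_apply, map_sub]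
  abel

lemma vlie_add_right (hY : DifferentiableAt ℝ Y p) (hZ : DifferentiableAt ℝ Z p) :
    vlie X (fun q => Y q + Z q) p = vlie X Y p + vlie X Z p := by
  simp only [vlie, fderiv_fun_add hY hZ, add_apply, map_add]
  abel

lemma vlie_smul_smul {f g : E → ℝ} (hf : DifferentiableAt ℝ f p) (hg : DifferentiableAt ℝ g p)
    (hX : DifferentiableAt ℝ X p) (hY : DifferentiableAt ℝ Y p) :
    vlie (fun q => f q • X q) (fun q => g q • Y q) p =
      (f p * g p) • vlie X Y p + (f p * fderiv ℝ g p (X p)) • Y p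
        - (g p * fderiv ℝ f p (Y p)) • X p := by
  simp only [vlie, fderiv_fun_smul hf hX, fderiv_fun_smul hg hY, add_apply, smul_apply,
    ContinuousLinearMap.smulRight_apply, map_smul, smul_sub]
  module

lemma differentiableAt_fderiv_apply {u : E → ℝ} (hu : ContDiffAt ℝ 2 u p)
    (hX : DifferentiableAt ℝ X p) : DifferentiableAt ℝ (fun q => fderiv ℝ u q (X q)) p :=
  ((hu.fderiv_right (m := 1) le_rfl).differentiableAt one_ne_zero).clm_apply hX

lemma fderiv_fderiv_apply {u : E → ℝ} (hu : ContDiffAt ℝ 2 u p) (hX : DifferentiableAt ℝ X p)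
    (v : E) : fderiv ℝ (fun q => fderiv ℝ u q (X q)) p v =
      fderiv ℝ (fderiv ℝ u) p v (X p) + fderiv ℝ u p (fderiv ℝ X p v) := by
  rw [fderiv_clm_apply ((hu.fderiv_right (m := 1) le_rfl).differentiableAt one_ne_zero) hX]
  simp only [add_apply, ContinuousLinearMap.comp_apply, ContinuousLinearMap.flip_apply]
  abel

lemma fderiv_apply_vlie {u : E → ℝ} (hu : ContDiffAt ℝ 2 u p) (hX : DifferentiableAt ℝ X p)
    (hY : DifferentiableAt ℝ Y p) :
    fderiv ℝ u p (vlie X Y p) = fderiv ℝ (fun q => fderiv ℝ u q (Y q)) p (X p)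
      - fderiv ℝ (fun q => fderiv ℝ u q (X q)) p (Y p) := by
  rw [fderiv_fderiv_apply hu hY, fderiv_fderiv_apply hu hX,
    (hu.isSymmSndFDerivAt (by simp)).eq (X p) (Y p), vlie, map_sub]
  abel

end VectorFields

lemma mul_fderiv_add_mul_fderiv_eq_zero {E : Type*} [NormedAddCommGroup E] [NormedSpace ℝ E]
    {f g : E → ℝ} {c : ℝ} {p : E} (h : ∀ q, f q ^ 2 + g q ^ 2 = c)
    (hf : DifferentiableAt ℝ f p) (hg : DifferentiableAt ℝ g p) (v : E) :
    f p * fderiv ℝ f p v + g p * fderiv ℝ g p v = 0 := by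
  have hconst : HasFDerivAt (fun q => f q ^ 2 + g q ^ 2) (0 : E →L[ℝ] ℝ) p := by
    simpa only [funext h] using hasFDerivAt_const c p
  have hderiv := congrArg (· v)
    (((hf.hasFDerivAt.pow 2).fun_add (hg.hasFDerivAt.pow 2)).unique hconst)
  simp only [Nat.add_one_sub_one, pow_one, nsmul_eq_mul, Nat.cast_ofNat, add_apply, smul_apply,
    smul_eq_mul, zero_apply] at hderiv
  linarith

theorem bracket_JN_N_general
    {E : Type*} [NormedAddCommGroup E] [NormedSpace ℝ E]
    (X1 X2 X0 : E → E) (c1 c2 : E → ℝ) (δ : E → ℝ)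
    (hX1 : ContDiff ℝ (⊤ : ℕ∞) X1) (hX2 : ContDiff ℝ (⊤ : ℕ∞) X2)
    (hδ : ContDiff ℝ (⊤ : ℕ∞) δ)
    (hbr : ∀ p, vlie X2 X1 p = c1 p • X1 p + c2 p • X2 p + X0 p)
    (heik : ∀ p, (fderiv ℝ δ p (X1 p)) ^ 2 + (fderiv ℝ δ p (X2 p)) ^ 2 = 1)
    (N JN : E → E) (H : E → ℝ)
    (hN : N = fun p => (fderiv ℝ δ p (X1 p)) • X1 p + (fderiv ℝ δ p (X2 p)) • X2 p)
    (hJN : JN = fun p => (fderiv ℝ δ p (X1 p)) • X2 p - (fderiv ℝ δ p (X2 p)) • X1 p)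
    (hH : H = fun p =>
      -(fderiv ℝ (fun q => fderiv ℝ δ q (X1 q)) p (X1 p))
        - fderiv ℝ (fun q => fderiv ℝ δ q (X2 q)) p (X2 p)
        - c2 p * fderiv ℝ δ p (X1 p) + c1 p * fderiv ℝ δ p (X2 p)) :
    ∀ p : E, vlie JN N p = -(H p) • JN p - (fderiv ℝ δ p (X0 p)) • N p + X0 p := by
  intro p
  subst hN hJN hH
  have hδ2 : ContDiffAt ℝ 2 δ p := hδ.contDiffAt.of_le (WithTop.coe_le_coe.mpr le_top)
  have hX1p : DifferentiableAt ℝ X1 p := hX1.differentiable (by simp) p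
  have hX2p : DifferentiableAt ℝ X2 p := hX2.differentiable (by simp) p
  have ha := differentiableAt_fderiv_apply hδ2 hX1p
  have hb := differentiableAt_fderiv_apply hδ2 hX2p
  have hbrδ := fderiv_apply_vlie hδ2 hX2p hX1p
  rw [hbr p, map_add, map_add, map_smul, map_smul, smul_eq_mul, smul_eq_mul] at hbrδ
  have heik1 := mul_fderiv_add_mul_fderiv_eq_zero heik ha hb (X1 p)
  have heik2 := mul_fderiv_add_mul_fderiv_eq_zero heik ha hb (X2 p)
  rw [vlie_sub_left (ha.fun_smul hX2p) (hb.fun_smul hX1p),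
    vlie_add_right (ha.fun_smul hX1p) (hb.fun_smul hX2p),
    vlie_add_right (ha.fun_smul hX1p) (hb.fun_smul hX2p), vlie_smul_smul ha ha hX2p hX1p,
    vlie_smul_smul ha hb hX2p hX2p, vlie_smul_smul hb ha hX1p hX1p,
    vlie_smul_smul hb hb hX1p hX2p, vlie_swap X2 X1, vlie_self, vlie_self, hbr p]
  -- the coefficients of `X1 p`, `X2 p` and `X0 p`
  match_scalars
  · linear_combination 2 * heik2 + fderiv ℝ δ p (X1 p) * hbrδ
  · linear_combination -2 * heik1 + fderiv ℝ δ p (X2 p) * hbrδ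
  · linear_combination heik p

/-- Lemma 5.2 of the paper: if `[X2, X1] = c¹·X1 + c²·X2 + X0` and
`δ` satisfies the eikonal equation `(X1δ)² + (X2δ)² = 1`, then with
`N = (X1δ)X1 + (X2δ)X2`, `JN = (X1δ)X2 − (X2δ)X1` and
`H = −X1X1δ − X2X2δ − c²(X1δ) + c¹(X2δ)` one has
`[JN, N] = −H·JN − (X0δ)·N + X0`. -/
theorem bracket_JN_N
    {E : Type*} [NormedAddCommGroup E] [NormedSpace ℝ E] [FiniteDimensional ℝ E]
    (X1 X2 X0 : E → E) (c1 c2 : E → ℝ) (δ : E → ℝ)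
    (hX1 : ContDiff ℝ (⊤ : ℕ∞) X1) (hX2 : ContDiff ℝ (⊤ : ℕ∞) X2)
    (hX0 : ContDiff ℝ (⊤ : ℕ∞) X0)
    (hc1 : ContDiff ℝ (⊤ : ℕ∞) c1) (hc2 : ContDiff ℝ (⊤ : ℕ∞) c2)
    (hδ : ContDiff ℝ (⊤ : ℕ∞) δ)
    (hbr : ∀ p, vlie X2 X1 p = c1 p • X1 p + c2 p • X2 p + X0 p)
    (heik : ∀ p, (fderiv ℝ δ p (X1 p)) ^ 2 + (fderiv ℝ δ p (X2 p)) ^ 2 = 1)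
    (N JN : E → E) (H : E → ℝ)
    (hN : N = fun p => (fderiv ℝ δ p (X1 p)) • X1 p + (fderiv ℝ δ p (X2 p)) • X2 p)
    (hJN : JN = fun p => (fderiv ℝ δ p (X1 p)) • X2 p - (fderiv ℝ δ p (X2 p)) • X1 p)
    (hH : H = fun p =>
      -(fderiv ℝ (fun q => fderiv ℝ δ q (X1 q)) p (X1 p))
        - fderiv ℝ (fun q => fderiv ℝ δ q (X2 q)) p (X2 p)
        - c2 p * fderiv ℝ δ p (X1 p) + c1 p * fderiv ℝ δ p (X2 p)) :
    ∀ p : E, vlie JN N p = -(H p) • JN p - (fderiv ℝ δ p (X0 p)) • N p + X0 p :=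
  bracket_JN_N_general X1 X2 X0 c1 c2 δ hX1 hX2 hδ hbr heik N JN H hN hJN hH
end

section
/- Let E be a finite-dimensional real normed vector space, X1, X2, X0 : E → E C^∞ vector fields, δ, h : E → ℝ C^∞ functions with (X1δ)² + (X2δ)² = 1 everywhere, and set f = e^h·δ and m = √((X1f)² + (X2f)²). Then at every point p with δ(p) = 0: X0(X0δ)(p) = X0(X0f)(p)/m(p) − 2·X0(h)(p)·X0(f)(p)/m(p). (Hence the second derivative X0X0δ along the surface can be recovered from f only if the density h relating f = e^h·δ is known.) -/
/-!
At a zero `p` of `δ`, every term of a derivative of `f = e^h δ` in which `δ` itself survives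
vanishes. Hence `Xf(p) = e^{h(p)} Xδ(p)` for every vector field `X`, so the eikonal equation gives
`m(p) = e^{h(p)}`, and differentiating `X₀f = e^h (δ X₀h + X₀δ)` once more along `X₀` gives
`X₀X₀f(p) = e^{h(p)} (X₀X₀δ(p) + 2 X₀h(p) X₀δ(p))`. Dividing by `m(p)` yields the formula.
-/

open Real

section DefiningFunction

variable {E : Type*} [NormedAddCommGroup E] [NormedSpace ℝ E]

theorem ContDiff.differentiable_fderiv_apply {u : E → ℝ} {X : E → E} (hu : ContDiff ℝ 2 u)
    (hX : Differentiable ℝ X) : Differentiable ℝ (fun q => fderiv ℝ u q (X q)) :=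
  ((hu.fderiv_right (m := 1) (by norm_num)).differentiable one_ne_zero).clm_apply hX

theorem fderiv_mul_apply_of_eq_zero {u v : E → ℝ} {p : E} (hu : DifferentiableAt ℝ u p)
    (hv : DifferentiableAt ℝ v p) (hp : u p = 0) (w : E) :
    fderiv ℝ (fun q => u q * v q) p w = fderiv ℝ u p w * v p := by
  rw [fderiv_fun_mul hu hv]
  simp [hp, mul_comm]

variable {h δ : E → ℝ}

theorem fderiv_exp_mul_apply {q : E} (hh : DifferentiableAt ℝ h q)
    (hδ : DifferentiableAt ℝ δ q) (w : E) :
    fderiv ℝ (fun q => exp (h q) * δ q) q w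
      = exp (h q) * (δ q * fderiv ℝ h q w + fderiv ℝ δ q w) := by
  rw [fderiv_fun_mul hh.exp hδ, fderiv_exp hh]
  simp only [add_apply, smul_apply, smul_eq_mul]
  ring

theorem fderiv_exp_mul_apply_of_eq_zero {p : E} (hh : DifferentiableAt ℝ h p)
    (hδ : DifferentiableAt ℝ δ p) (hp : δ p = 0) (w : E) :
    fderiv ℝ (fun q => exp (h q) * δ q) p w = exp (h p) * fderiv ℝ δ p w := by
  rw [fderiv_exp_mul_apply hh hδ, hp, zero_mul, zero_add]

theorem sqrt_fderiv_exp_mul_sq_add_sq_of_eq_zero (X1 X2 : E → E) {p : E}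
    (hh : DifferentiableAt ℝ h p) (hδ : DifferentiableAt ℝ δ p) (hp : δ p = 0)
    (heik : (fderiv ℝ δ p (X1 p)) ^ 2 + (fderiv ℝ δ p (X2 p)) ^ 2 = 1) :
    √((fderiv ℝ (fun q => exp (h q) * δ q) p (X1 p)) ^ 2
        + (fderiv ℝ (fun q => exp (h q) * δ q) p (X2 p)) ^ 2) = exp (h p) := by
  simp only [fderiv_exp_mul_apply_of_eq_zero hh hδ hp, mul_pow, ← mul_add, heik, mul_one]
  exact sqrt_sq (exp_nonneg _)

theorem fderiv_fderiv_exp_mul_apply_of_eq_zero (X : E → E) {p : E} (hh : Differentiable ℝ h)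
    (hδ : Differentiable ℝ δ) (hXh : DifferentiableAt ℝ (fun q => fderiv ℝ h q (X q)) p)
    (hXδ : DifferentiableAt ℝ (fun q => fderiv ℝ δ q (X q)) p) (hp : δ p = 0) :
    fderiv ℝ (fun q => fderiv ℝ (fun q => exp (h q) * δ q) q (X q)) p (X p)
      = exp (h p) * (fderiv ℝ (fun q => fderiv ℝ δ q (X q)) p (X p)
          + 2 * fderiv ℝ h p (X p) * fderiv ℝ δ p (X p)) := by
  have hXf : (fun q => fderiv ℝ (fun q => exp (h q) * δ q) q (X q))
      = fun q => exp (h q) * (δ q * fderiv ℝ h q (X q) + fderiv ℝ δ q (X q)) :=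
    funext fun q => fderiv_exp_mul_apply (hh q) (hδ q) (X q)
  have hδXh : DifferentiableAt ℝ (fun q => δ q * fderiv ℝ h q (X q)) p := (hδ p).mul hXh
  rw [hXf, fderiv_fun_mul (hh p).exp (hδXh.fun_add hXδ), fderiv_fun_add hδXh hXδ,
    fderiv_exp (hh p)]
  simp only [add_apply, smul_apply, smul_eq_mul,
    fderiv_mul_apply_of_eq_zero (hδ p) hXh hp, hp]
  ring

end DefiningFunction

theorem second_reeb_derivative_from_defining_function_general
    {E : Type*} [NormedAddCommGroup E] [NormedSpace ℝ E]
    (X1 X2 X0 : E → E) (δ h : E → ℝ)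
    (hX0 : ContDiff ℝ (⊤ : ℕ∞) X0)
    (hδ : ContDiff ℝ (⊤ : ℕ∞) δ) (hh : ContDiff ℝ (⊤ : ℕ∞) h)
    (heik : ∀ q, (fderiv ℝ δ q (X1 q)) ^ 2 + (fderiv ℝ δ q (X2 q)) ^ 2 = 1)
    (f : E → ℝ) (hf : f = fun q => Real.exp (h q) * δ q)
    (m : E → ℝ)
    (hm : m = fun q => Real.sqrt ((fderiv ℝ f q (X1 q)) ^ 2 + (fderiv ℝ f q (X2 q)) ^ 2))
    (p : E) (hp : δ p = 0) :
    fderiv ℝ (fun q => fderiv ℝ δ q (X0 q)) p (X0 p)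
      = fderiv ℝ (fun q => fderiv ℝ f q (X0 q)) p (X0 p) / m p
        - 2 * (fderiv ℝ h p (X0 p)) * (fderiv ℝ f p (X0 p)) / m p := by
  subst hf hm
  beta_reduce
  have hX0d : Differentiable ℝ X0 := hX0.differentiable (by simp)
  have hδ2 : ContDiff ℝ 2 δ := hδ.of_le (WithTop.coe_le_coe.mpr le_top)
  have hh2 : ContDiff ℝ 2 h := hh.of_le (WithTop.coe_le_coe.mpr le_top)
  have hδd : Differentiable ℝ δ := hδ2.differentiable (by norm_num)
  have hhd : Differentiable ℝ h := hh2.differentiable (by norm_num)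
  rw [sqrt_fderiv_exp_mul_sq_add_sq_of_eq_zero X1 X2 (hhd p) (hδd p) hp (heik p),
    fderiv_fderiv_exp_mul_apply_of_eq_zero X0 hhd hδd
      (hh2.differentiable_fderiv_apply hX0d p) (hδ2.differentiable_fderiv_apply hX0d p) hp,
    fderiv_exp_mul_apply_of_eq_zero (hhd p) (hδd p) hp]
  field_simp
  ring

/-- Remark 6.2 of the paper: if `δ` satisfies the eikonal equation
`(X1δ)² + (X2δ)² = 1`, `f = e^h·δ` and `m = √((X1f)² + (X2f)²)`, then on the zero
level set of `δ` one has `X0X0δ = X0X0f/m − 2·X0h·X0f/m`. -/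
theorem second_reeb_derivative_from_defining_function
    {E : Type*} [NormedAddCommGroup E] [NormedSpace ℝ E] [FiniteDimensional ℝ E]
    (X1 X2 X0 : E → E) (δ h : E → ℝ)
    (hX1 : ContDiff ℝ (⊤ : ℕ∞) X1) (hX2 : ContDiff ℝ (⊤ : ℕ∞) X2)
    (hX0 : ContDiff ℝ (⊤ : ℕ∞) X0)
    (hδ : ContDiff ℝ (⊤ : ℕ∞) δ) (hh : ContDiff ℝ (⊤ : ℕ∞) h)
    (heik : ∀ q, (fderiv ℝ δ q (X1 q)) ^ 2 + (fderiv ℝ δ q (X2 q)) ^ 2 = 1)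
    (f : E → ℝ) (hf : f = fun q => Real.exp (h q) * δ q)
    (m : E → ℝ)
    (hm : m = fun q => Real.sqrt ((fderiv ℝ f q (X1 q)) ^ 2 + (fderiv ℝ f q (X2 q)) ^ 2))
    (p : E) (hp : δ p = 0) :
    fderiv ℝ (fun q => fderiv ℝ δ q (X0 q)) p (X0 p)
      = fderiv ℝ (fun q => fderiv ℝ f q (X0 q)) p (X0 p) / m p
        - 2 * (fderiv ℝ h p (X0 p)) * (fderiv ℝ f p (X0 p)) / m p :=
  second_reeb_derivative_from_defining_function_general X1 X2 X0 δ h hX0 hδ hh heik f hf m hm p hp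
end

section
/- On ℝ⁴ with coordinates (x,y,z,w), let k > 0 and consider the SL(2,ℝ) frame X1(p) = k·(y, x, w, z), X2(p) = k·(x, −y, z, −w), X0(p) = 2k²·(−y, x, −w, z). Let f(x,y,z,w) = y − z, m = √((X1f)² + (X2f)²) = k·√((x−w)² + (y+z)²), and F = X0(f)/m = 2k(x+w)/√((x−w)² + (y+z)²) (smooth on {(x−w, y+z) ≠ (0,0)}). Define X_S acting on smooth functions u by X_S(u) = ((X2f)·X1(u) − (X1f)·X2(u))/m. Then at every point p with y = z and (x−w, y+z) ≠ (0,0): 2·X_S(F)(p) − F(p)² = −4k². -/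
/-!
On `{y = z}` everything is explicit: with `a = x - w`, `b = y + z`, `N = x + w` and `S = a² + b²`
one has `(X1 f, X2 f) = k (a, -b)`, `m = k √S` and `F = 2k N / √S`. Since `X1 a = X2 b = 0`
on the surface, the quotient rule gives `(X1 F, X2 F) = 2k² (S - N²) / S^{3/2} · (b, a)`, so
`X_S F = -2k² (S - N²) / S` and `2 X_S F - F² = -4k² (S - N²) / S - 4k² N² / S = -4k²`.
-/

open ContinuousLinearMap

theorem HasFDerivAt.div_sqrt {E : Type*} [NormedAddCommGroup E] [NormedSpace ℝ E]
    {u s : E → ℝ} {u' s' : StrongDual ℝ E} {p : E}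
    (hu : HasFDerivAt u u' p) (hs : HasFDerivAt s s' p) (hsp : 0 < s p) :
    HasFDerivAt (fun q => u q / √(s q)) ((√(s p))⁻¹ • (u' - (u p / (2 * s p)) • s')) p := by
  have hsqrt : √(s p) ≠ 0 := Real.sqrt_ne_zero'.2 hsp
  have hinv := (hasDerivAt_inv hsqrt).comp_hasFDerivAt p (hs.sqrt hsp.ne')
  simp only [div_eq_mul_inv]
  refine (hu.mul hinv).congr_fderiv ?_
  ext v
  simp only [smul_apply, sub_apply, add_apply, smul_eq_mul, Function.comp_apply]
  field_simp
  rw [Real.sq_sqrt hsp.le]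
  ring

namespace SL2Model

noncomputable def coordX : ℝ × ℝ × ℝ × ℝ →L[ℝ] ℝ := fst ℝ ℝ (ℝ × ℝ × ℝ)

noncomputable def coordY : ℝ × ℝ × ℝ × ℝ →L[ℝ] ℝ := (fst ℝ ℝ (ℝ × ℝ)).comp (snd ℝ ℝ (ℝ × ℝ × ℝ))

noncomputable def coordZ : ℝ × ℝ × ℝ × ℝ →L[ℝ] ℝ :=
  ((fst ℝ ℝ ℝ).comp (snd ℝ ℝ (ℝ × ℝ))).comp (snd ℝ ℝ (ℝ × ℝ × ℝ))

noncomputable def coordW : ℝ × ℝ × ℝ × ℝ →L[ℝ] ℝ :=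
  ((snd ℝ ℝ ℝ).comp (snd ℝ ℝ (ℝ × ℝ))).comp (snd ℝ ℝ (ℝ × ℝ × ℝ))

@[simp] lemma coordX_apply (q : ℝ × ℝ × ℝ × ℝ) : coordX q = q.1 := rfl
@[simp] lemma coordY_apply (q : ℝ × ℝ × ℝ × ℝ) : coordY q = q.2.1 := rfl
@[simp] lemma coordZ_apply (q : ℝ × ℝ × ℝ × ℝ) : coordZ q = q.2.2.1 := rfl
@[simp] lemma coordW_apply (q : ℝ × ℝ × ℝ × ℝ) : coordW q = q.2.2.2 := rfl

/-- `((X1 f)² + (X2 f)²) / k²` for `f = y - z`, since `(X1 f, X2 f) = k (x - w, -(y + z))`. -/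
def horizontalGradSq (q : ℝ × ℝ × ℝ × ℝ) : ℝ := (q.1 - q.2.2.2) ^ 2 + (q.2.1 + q.2.2.1) ^ 2

lemma horizontalGradSq_pos {q : ℝ × ℝ × ℝ × ℝ}
    (hq : (q.1 - q.2.2.2, q.2.1 + q.2.2.1) ≠ ((0 : ℝ), (0 : ℝ))) : 0 < horizontalGradSq q := by
  rw [Ne, Prod.mk.injEq, not_and_or] at hq
  unfold horizontalGradSq
  rcases hq with hq | hq <;> positivity

lemma hasFDerivAt_horizontalGradSq (p : ℝ × ℝ × ℝ × ℝ) :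
    HasFDerivAt horizontalGradSq ((2 * (p.1 - p.2.2.2)) • (coordX - coordW)
      + (2 * (p.2.1 + p.2.2.1)) • (coordY + coordZ)) p := by
  have h := ((coordX - coordW).hasFDerivAt (x := p)).pow 2 |>.add
    ((coordY + coordZ).hasFDerivAt.pow 2)
  refine (h.congr_fderiv ?_).congr_of_eventuallyEq (.of_forall fun q => ?_)
  · refine ContinuousLinearMap.ext fun v => ?_
    simp only [add_apply, sub_apply, smul_apply, smul_eq_mul, nsmul_eq_mul, coordX_apply,
      coordY_apply, coordZ_apply, coordW_apply]
    norm_num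
  · simp [horizontalGradSq]

/-- The closed form of `F = X0 f / m` for `f = y - z`. -/
noncomputable def modelF (k : ℝ) (q : ℝ × ℝ × ℝ × ℝ) : ℝ :=
  2 * k * (q.1 + q.2.2.2) / √(horizontalGradSq q)

lemma hasFDerivAt_modelF (k : ℝ) {p : ℝ × ℝ × ℝ × ℝ} (hp : 0 < horizontalGradSq p) :
    HasFDerivAt (modelF k) ((√(horizontalGradSq p))⁻¹ • ((2 * k) • (coordX + coordW)
      - (2 * k * (p.1 + p.2.2.2) / (2 * horizontalGradSq p)) •
        ((2 * (p.1 - p.2.2.2)) • (coordX - coordW)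
          + (2 * (p.2.1 + p.2.2.1)) • (coordY + coordZ)))) p := by
  have hu : HasFDerivAt (fun q : ℝ × ℝ × ℝ × ℝ => 2 * k * (q.1 + q.2.2.2))
      ((2 * k) • (coordX + coordW)) p :=
    ((2 * k) • (coordX + coordW)).hasFDerivAt.congr_of_eventuallyEq
      (.of_forall fun q => by simp [mul_add])
  exact hu.div_sqrt (hasFDerivAt_horizontalGradSq p) hp

lemma fderiv_modelF_X1 (k : ℝ) {p : ℝ × ℝ × ℝ × ℝ} (hyz : p.2.1 = p.2.2.1)
    (hp : 0 < horizontalGradSq p) :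
    fderiv ℝ (modelF k) p (k * p.2.1, k * p.1, k * p.2.2.2, k * p.2.2.1)
      = 2 * k ^ 2 * (p.2.1 + p.2.2.1) * (horizontalGradSq p - (p.1 + p.2.2.2) ^ 2)
        / (horizontalGradSq p * √(horizontalGradSq p)) := by
  rw [(hasFDerivAt_modelF k hp).fderiv]
  simp only [smul_apply, sub_apply, add_apply, smul_eq_mul, coordX_apply, coordY_apply,
    coordZ_apply, coordW_apply, hyz]
  field_simp
  ring

lemma fderiv_modelF_X2 (k : ℝ) {p : ℝ × ℝ × ℝ × ℝ} (hyz : p.2.1 = p.2.2.1)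
    (hp : 0 < horizontalGradSq p) :
    fderiv ℝ (modelF k) p (k * p.1, -(k * p.2.1), k * p.2.2.1, -(k * p.2.2.2))
      = 2 * k ^ 2 * (p.1 - p.2.2.2) * (horizontalGradSq p - (p.1 + p.2.2.2) ^ 2)
        / (horizontalGradSq p * √(horizontalGradSq p)) := by
  rw [(hasFDerivAt_modelF k hp).fderiv]
  simp only [smul_apply, sub_apply, add_apply, smul_eq_mul, coordX_apply, coordY_apply,
    coordZ_apply, coordW_apply, hyz]
  field_simp
  ring

end SL2Model

open SL2Model

/-- for the `SL(2,ℝ)` frame `X1 = k(y,x,w,z)`, `X2 = k(x,−y,z,−w)`,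
`X0 = 2k²(−y,x,−w,z)` and the model surface `{y = z}` with defining function
`f = y − z`, setting `m = √((X1f)² + (X2f)²)`, `F = X0f/m` and
`X_S(u) = ((X2f)·X1(u) − (X1f)·X2(u))/m`, at every point with `y = z` and
`(x−w, y+z) ≠ (0,0)` one has `F = 2k(x+w)/√((x−w)² + (y+z)²)` and
`2·X_S(F) − F² = −4k²`. -/
theorem sl2_model_surface_a3_integrand
    (k : ℝ) (hk : 0 < k)
    (X1 X2 X0 : ℝ × ℝ × ℝ × ℝ → ℝ × ℝ × ℝ × ℝ)
    (hX1 : X1 = fun p => (k * p.2.1, k * p.1, k * p.2.2.2, k * p.2.2.1))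
    (hX2 : X2 = fun p => (k * p.1, -(k * p.2.1), k * p.2.2.1, -(k * p.2.2.2)))
    (hX0 : X0 = fun p =>
      (-(2 * k ^ 2 * p.2.1), 2 * k ^ 2 * p.1, -(2 * k ^ 2 * p.2.2.2), 2 * k ^ 2 * p.2.2.1))
    (f : ℝ × ℝ × ℝ × ℝ → ℝ) (hf : f = fun p => p.2.1 - p.2.2.1)
    (X1f X2f m F : ℝ × ℝ × ℝ × ℝ → ℝ)
    (hX1f : X1f = fun q => fderiv ℝ f q (X1 q))
    (hX2f : X2f = fun q => fderiv ℝ f q (X2 q))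
    (hm : m = fun q => Real.sqrt ((X1f q) ^ 2 + (X2f q) ^ 2))
    (hF : F = fun q => fderiv ℝ f q (X0 q) / m q)
    (p : ℝ × ℝ × ℝ × ℝ) (hyz : p.2.1 = p.2.2.1)
    (hne : (p.1 - p.2.2.2, p.2.1 + p.2.2.1) ≠ ((0 : ℝ), (0 : ℝ))) :
    F p = 2 * k * (p.1 + p.2.2.2)
        / Real.sqrt ((p.1 - p.2.2.2) ^ 2 + (p.2.1 + p.2.2.1) ^ 2) ∧
    2 * ((X2f p * fderiv ℝ F p (X1 p) - X1f p * fderiv ℝ F p (X2 p)) / m p)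
        - (F p) ^ 2 = -(4 * k ^ 2) := by
  subst hX1 hX2 hX0 hf
  have hdf (q : ℝ × ℝ × ℝ × ℝ) : fderiv ℝ (fun p => p.2.1 - p.2.2.1) q = coordY - coordZ :=
    (coordY - coordZ).fderiv
  have hX1f_eq (q : ℝ × ℝ × ℝ × ℝ) : X1f q = k * (q.1 - q.2.2.2) := by
    simp [hX1f, hdf, mul_sub]
  have hX2f_eq (q : ℝ × ℝ × ℝ × ℝ) : X2f q = -(k * (q.2.1 + q.2.2.1)) := by
    simp only [hX2f, hdf, sub_apply, coordY_apply, coordZ_apply]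
    ring
  have hm_eq (q : ℝ × ℝ × ℝ × ℝ) : m q = k * √(horizontalGradSq q) := by
    have hsum : (k * (q.1 - q.2.2.2)) ^ 2 + (-(k * (q.2.1 + q.2.2.1))) ^ 2
        = k ^ 2 * horizontalGradSq q := by
      rw [horizontalGradSq]; ring
    simp only [hm, hX1f_eq, hX2f_eq]
    rw [hsum, Real.sqrt_mul (sq_nonneg k), Real.sqrt_sq hk.le]
  have hF_eq : F = modelF k := by
    funext q
    simp only [hF, hm_eq, hdf, modelF, sub_apply, coordY_apply, coordZ_apply]
    field_simp
    ring
  have hS := horizontalGradSq_pos hne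
  refine ⟨by rw [hF_eq]; rfl, ?_⟩
  rw [hF_eq, fderiv_modelF_X1 k hyz hS, fderiv_modelF_X2 k hyz hS, hX1f_eq, hX2f_eq, hm_eq, modelF]
  have hSdef : (p.1 - p.2.2.2) ^ 2 + (p.2.1 + p.2.2.1) ^ 2 = horizontalGradSq p := rfl
  have hsq : √(horizontalGradSq p) ^ 2 = horizontalGradSq p := Real.sq_sqrt hS.le
  field_simp
  linear_combination (-4 * (horizontalGradSq p - (p.1 + p.2.2.2) ^ 2)) * hSdef
    + 4 * horizontalGradSq p * hsq
end
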